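/- arXiv:2505.05709 — 3 statements merged into one kernel-verified Lean document; each statement's English description precedes it below -/
import Mathlib

section
/- For any two directions e₁, e₂ in S^{n-1} and points a₁, a₂ in ℝⁿ, the diameter of the intersection of the δ-tubes T^δ_{e₁}(a₁) and T^δ_{e₂}(a₂) is at most a constant (depending only on n) times δ/(θ(e₁,e₂) + δ), where θ(e₁,e₂) is the acute angle between e₁ and e₂. -/
open MeasureTheory Metric Set Filter ENNReal Topology

noncomputable section

/-- The Euclidean space `ℝⁿ`. -/
abbrev Euc (n : ℕ) := EuclideanSpace ℝ (Fin n)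

/-- The smallest number of sets of diameter at most `δ` needed to cover `E`. -/
def coveringNumber {X : Type*} [EMetricSpace X] (δ : ℝ) (E : Set X) : ℝ≥0∞ :=
  sInf {m : ℝ≥0∞ | ∃ t : Finset (Set X), (t.card : ℝ≥0∞) = m ∧
    (E ⊆ ⋃ s ∈ t, s) ∧ ∀ s ∈ t, EMetric.diam s ≤ ENNReal.ofReal δ}

/-- The upper box-counting dimension of `E`. -/
def upperBoxDim {X : Type*} [EMetricSpace X] (E : Set X) : ℝ≥0∞ :=
  ENNReal.ofReal (Filter.limsup
    (fun δ : ℝ => Real.log (coveringNumber δ E).toReal / -Real.log δ) (𝓝[>] (0 : ℝ)))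

/-- The lower box-counting dimension of `E`. -/
def lowerBoxDim {X : Type*} [EMetricSpace X] (E : Set X) : ℝ≥0∞ :=
  ENNReal.ofReal (Filter.liminf
    (fun δ : ℝ => Real.log (coveringNumber δ E).toReal / -Real.log δ) (𝓝[>] (0 : ℝ)))

/-- The packing dimension of `E`, defined via countable covers and upper box dimension. -/
def packingDim {X : Type*} [EMetricSpace X] (E : Set X) : ℝ≥0∞ :=
  ⨅ (c : ℕ → Set X) (_ : E ⊆ ⋃ i, c i), ⨆ i, upperBoxDim (c i)

/-- The unit line segment in direction `e` with midpoint `a`. -/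
def unitSegment {n : ℕ} (e a : Euc n) : Set (Euc n) :=
  {x | ∃ t : ℝ, |t| ≤ 1 / 2 ∧ x = a + t • e}

/-- The δ-tube `T^δ_e(a)`: the δ-neighbourhood of the unit segment in direction `e`
with midpoint `a`. -/
def tube {n : ℕ} (δ : ℝ) (e a : Euc n) : Set (Euc n) :=
  Metric.cthickening δ (unitSegment e a)

/-- The surface measure on the unit sphere `S^{n-1} ⊆ ℝⁿ`, realised as the
`(n-1)`-dimensional Hausdorff measure restricted to the sphere. -/
def sphereMeasure (n : ℕ) : Measure (Euc n) :=
  (μH[(n : ℝ) - 1]).restrict (Metric.sphere (0 : Euc n) 1)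

/-- The `A`-restricted Kakeya maximal function applied to the characteristic function of `E`. -/
def kakeyaMaxSet {n : ℕ} (A : Set (Euc n)) (δ : ℝ) (E : Set (Euc n)) (e : Euc n) : ℝ≥0∞ :=
  ⨆ a ∈ A, volume (E ∩ tube δ e a) / volume (tube δ e a)

/-- The (unrestricted) Kakeya maximal function of `f` in `ℝᵐ`. -/
def kakeyaMaxFun (m : ℕ) (δ : ℝ) (f : Euc m → ℝ) (e : Euc m) : ℝ≥0∞ :=
  ⨆ a : Euc m, (∫⁻ x in tube δ e a, ENNReal.ofReal |f x|) / volume (tube δ e a)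

/-- The weak `L^{q,∞}` (Lorentz) norm on the sphere `S^{n-1}`. -/
def wnormS (n : ℕ) (q : ℝ) (g : Euc n → ℝ≥0∞) : ℝ≥0∞ :=
  ⨆ t : ℝ≥0∞, t * (sphereMeasure n {e | t < g e}) ^ (1 / q)

/-- The `L^p` norm on the sphere `S^{n-1}` of an `ℝ≥0∞`-valued function. -/
def lpNormS (n : ℕ) (p : ℝ) (g : Euc n → ℝ≥0∞) : ℝ≥0∞ :=
  (∫⁻ e, g e ^ p ∂(sphereMeasure n)) ^ (1 / p)

/-- The `L^p(ℝᵐ)` norm of `f`. -/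
def lpNorm (m : ℕ) (p : ℝ) (f : Euc m → ℝ) : ℝ≥0∞ :=
  (∫⁻ x, ENNReal.ofReal |f x| ^ p) ^ (1 / p)

/-- The acute angle between the directions `e₁` and `e₂`. -/
def acuteAngle {n : ℕ} (e₁ e₂ : Euc n) : ℝ :=
  Real.arccos |(inner ℝ e₁ e₂ : ℝ)|

/-- `K` is an `A`-restricted Kakeya set: a compact set containing, for each direction
`e ∈ S^{n-1}`, a unit line segment in direction `e` with midpoint in `A`. -/
def IsRestrictedKakeya {n : ℕ} (A K : Set (Euc n)) : Prop :=
  IsCompact K ∧ ∀ e ∈ Metric.sphere (0 : Euc n) 1, ∃ a ∈ A, unitSegment e a ⊆ K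


/-- The unit segment is compact. -/
lemma unitSegment_isCompact {n : ℕ} (e a : Euc n) : IsCompact (unitSegment e a) := by
  have : unitSegment e a = (fun t : ℝ => a + t • e) '' Set.Icc (-(1/2)) (1/2) := by
    ext x
    simp only [unitSegment, Set.mem_setOf_eq, Set.mem_image, Set.mem_Icc, abs_le]
    constructor
    · rintro ⟨t, ht, rfl⟩; exact ⟨t, ⟨ht.1, ht.2⟩, rfl⟩
    · rintro ⟨t, ht, rfl⟩; exact ⟨t, ⟨ht.1, ht.2⟩, rfl⟩
  rw [this]
  exact (isCompact_Icc).image (by continuity)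

/-- Membership in a tube gives a nearby segment point. -/
lemma mem_tube_iff {n : ℕ} {δ : ℝ} (hδ : 0 ≤ δ) {e a x : Euc n} (hx : x ∈ tube δ e a) :
    ∃ t : ℝ, |t| ≤ 1 / 2 ∧ dist x (a + t • e) ≤ δ := by
  have hne : (unitSegment e a).Nonempty := ⟨a + (0:ℝ) • e, ⟨0, by norm_num⟩⟩
  obtain ⟨y, hy, hxy⟩ := (unitSegment_isCompact e a).exists_infEdist_eq_edist hne x
  obtain ⟨t, ht, rfl⟩ := hy
  refine ⟨t, ht, ?_⟩
  have h1 : infEDist x (unitSegment e a) ≤ ENNReal.ofReal δ := by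
    rwa [tube, Metric.mem_cthickening_iff] at hx
  rw [hxy, edist_dist] at h1
  exact (ENNReal.ofReal_le_ofReal_iff hδ).mp h1

open scoped RealInnerProductSpace in
/-- Best approximation on a line. -/
lemma proj_min {E : Type*} [NormedAddCommGroup E] [InnerProductSpace ℝ E] {e : E}
    (he : ‖e‖ = 1) (d : E) (t : ℝ) : ‖d - ⟪d, e⟫ • e‖ ≤ ‖d - t • e‖ := by
  have horth : ⟪d - ⟪d, e⟫ • e, (⟪d, e⟫ - t) • e⟫ = 0 := by
    rw [real_inner_smul_right, inner_sub_left, real_inner_smul_left,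
      real_inner_self_eq_norm_sq, he]
    ring
  have hdecomp : d - t • e = (d - ⟪d, e⟫ • e) + (⟪d, e⟫ - t) • e := by
    rw [sub_smul]; abel
  have := norm_add_sq_real (d - ⟪d, e⟫ • e) ((⟪d, e⟫ - t) • e)
  rw [horth] at this
  have h2 : ‖d - ⟪d, e⟫ • e‖ ^ 2 ≤ ‖d - t • e‖ ^ 2 := by
    rw [hdecomp, this]; nlinarith [sq_nonneg ‖(⟪d, e⟫ - t) • e‖]
  nlinarith [norm_nonneg (d - ⟪d, e⟫ • e), norm_nonneg (d - t • e), h2]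

open scoped RealInnerProductSpace in
lemma norm_sub_inner_smul {E : Type*} [NormedAddCommGroup E] [InnerProductSpace ℝ E]
    {e₁ e₂ : E} (he₁ : ‖e₁‖ = 1) (he₂ : ‖e₂‖ = 1) :
    ‖e₁ - ⟪e₁, e₂⟫ • e₂‖ = Real.sqrt (1 - ⟪e₁, e₂⟫ ^ 2) := by
  have h : ‖e₁ - ⟪e₁, e₂⟫ • e₂‖ ^ 2 = 1 - ⟪e₁, e₂⟫ ^ 2 := by
    rw [norm_sub_sq_real, real_inner_smul_right, norm_smul, he₁, he₂]
    simp [Real.norm_eq_abs, sq_abs]; ring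
  rw [← h, Real.sqrt_sq (norm_nonneg _)]

open scoped RealInnerProductSpace in
/-- Key geometric bound: any two points of the intersection of the tubes are close. -/
lemma dist_le_of_mem_tubes {n : ℕ} {e₁ e₂ a₁ a₂ : Euc n}
    (he₁ : ‖e₁‖ = 1) (he₂ : ‖e₂‖ = 1) {δ : ℝ} (hδ : 0 < δ) (hδ1 : δ < 1)
    {x y : Euc n} (hx₁ : x ∈ tube δ e₁ a₁) (hx₂ : x ∈ tube δ e₂ a₂)
    (hy₁ : y ∈ tube δ e₁ a₁) (hy₂ : y ∈ tube δ e₂ a₂) :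
    dist x y ≤ 19 * δ / (acuteAngle e₁ e₂ + δ) := by
  obtain ⟨t₁, ht₁, hxt₁⟩ := mem_tube_iff hδ.le hx₁
  obtain ⟨s₁, hs₁, hys₁⟩ := mem_tube_iff hδ.le hy₁
  obtain ⟨t₂, _, hxt₂⟩ := mem_tube_iff hδ.le hx₂
  obtain ⟨s₂, _, hys₂⟩ := mem_tube_iff hδ.le hy₂
  set d := x - y with hd
  set σ := t₁ - s₁ with hσ
  set τ := t₂ - s₂ with hτ
  set w₁ := (x - (a₁ + t₁ • e₁)) - (y - (a₁ + s₁ • e₁)) with hw₁def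
  set w₂ := (x - (a₂ + t₂ • e₂)) - (y - (a₂ + s₂ • e₂)) with hw₂def
  have hd1 : d = σ • e₁ + w₁ := by rw [hd, hσ, hw₁def, sub_smul]; abel
  have hd2 : d = τ • e₂ + w₂ := by rw [hd, hτ, hw₂def, sub_smul]; abel
  have hw₁ : ‖w₁‖ ≤ 2 * δ := by
    calc ‖w₁‖ ≤ ‖x - (a₁ + t₁ • e₁)‖ + ‖y - (a₁ + s₁ • e₁)‖ := norm_sub_le _ _
    _ ≤ 2 * δ := by
        rw [← dist_eq_norm, ← dist_eq_norm]; linarith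
  have hw₂ : ‖w₂‖ ≤ 2 * δ := by
    calc ‖w₂‖ ≤ ‖x - (a₂ + t₂ • e₂)‖ + ‖y - (a₂ + s₂ • e₂)‖ := norm_sub_le _ _
    _ ≤ 2 * δ := by
        rw [← dist_eq_norm, ← dist_eq_norm]; linarith
  set c := ⟪e₁, e₂⟫ with hc
  have hc1 : |c| ≤ 1 := by
    have := abs_real_inner_le_norm e₁ e₂; rwa [he₁, he₂, mul_one] at this
  -- ‖d - ⟪d,e₂⟫ e₂‖ ≤ 2δ
  have hq : ‖d - ⟪d, e₂⟫ • e₂‖ ≤ 2 * δ := by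
    calc ‖d - ⟪d, e₂⟫ • e₂‖ ≤ ‖d - τ • e₂‖ := proj_min he₂ d τ
    _ = ‖w₂‖ := by rw [hd2]; congr 1; abel
    _ ≤ 2 * δ := hw₂
  -- decompose q
  have hinner : ⟪d, e₂⟫ = σ * c + ⟪w₁, e₂⟫ := by
    rw [hd1, inner_add_left, real_inner_smul_left]
  have hqdecomp : d - ⟪d, e₂⟫ • e₂ = σ • (e₁ - c • e₂) + (w₁ - ⟪w₁, e₂⟫ • e₂) := by
    rw [hinner, hd1, smul_sub, smul_smul, add_smul, mul_smul]
    abel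
  have hcontr : ‖w₁ - ⟪w₁, e₂⟫ • e₂‖ ≤ ‖w₁‖ := by
    have := proj_min he₂ w₁ 0
    simpa using this
  have hkey : |σ| * Real.sqrt (1 - c ^ 2) ≤ 4 * δ := by
    have h1 : ‖σ • (e₁ - c • e₂)‖ ≤ ‖d - ⟪d, e₂⟫ • e₂‖ + ‖w₁ - ⟪w₁, e₂⟫ • e₂‖ := by
      have : σ • (e₁ - c • e₂) = (d - ⟪d, e₂⟫ • e₂) - (w₁ - ⟪w₁, e₂⟫ • e₂) := by
        rw [hqdecomp]; abel
      rw [this]; exact norm_sub_le _ _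
    rw [norm_smul, Real.norm_eq_abs, norm_sub_inner_smul he₁ he₂, ← hc] at h1
    linarith
  have hσ1 : |σ| ≤ 1 := by
    rw [hσ]
    calc |t₁ - s₁| ≤ |t₁| + |s₁| := abs_sub _ _
    _ ≤ 1 := by linarith
  have hdist : dist x y ≤ |σ| + 2 * δ := by
    rw [dist_eq_norm, ← hd, hd1]
    calc ‖σ • e₁ + w₁‖ ≤ ‖σ • e₁‖ + ‖w₁‖ := norm_add_le _ _
    _ ≤ |σ| + 2 * δ := by rw [norm_smul, Real.norm_eq_abs, he₁, mul_one]; linarith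
  set θ := acuteAngle e₁ e₂ with hθ
  have hθ0 : 0 ≤ θ := Real.arccos_nonneg _
  have hθpi : θ ≤ Real.pi / 2 := Real.arccos_le_pi_div_two.mpr (abs_nonneg _)
  have hsinθ : Real.sin θ = Real.sqrt (1 - c ^ 2) := by
    rw [hθ, acuteAngle, Real.sin_arccos, sq_abs, hc]
  have hjordan : 2 / Real.pi * θ ≤ Real.sqrt (1 - c ^ 2) := by
    rw [← hsinθ]; exact Real.mul_le_sin hθ0 hθpi
  have hpi : Real.pi < 3.15 := Real.pi_lt_d2
  have hpi3 : 3 < Real.pi := Real.pi_gt_three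
  have hθδ : 0 < θ + δ := by linarith
  rw [div_eq_mul_inv, ← div_eq_mul_inv, le_div_iff₀ hθδ]
  rcases le_or_gt θ δ with hcase | hcase
  · -- θ ≤ δ : dist ≤ 3 ≤ 19δ/(θ+δ)
    have h3 : dist x y ≤ 3 := by linarith
    calc dist x y * (θ + δ) ≤ 3 * (θ + δ) := by
          apply mul_le_mul_of_nonneg_right h3 hθδ.le
    _ ≤ 19 * δ := by linarith
  · -- δ < θ : |σ| ≤ 2πδ/θ
    have hθpos : 0 < θ := hδ.trans hcase
    have hπ0 : 0 < Real.pi := Real.pi_pos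
    have hσbound : |σ| * θ ≤ 2 * Real.pi * δ := by
      have h1 : |σ| * (2 / Real.pi * θ) ≤ |σ| * Real.sqrt (1 - c ^ 2) :=
        mul_le_mul_of_nonneg_left hjordan (abs_nonneg _)
      have h2 : |σ| * (2 / Real.pi * θ) ≤ 4 * δ := le_trans h1 hkey
      have heq : |σ| * θ = Real.pi / 2 * (|σ| * (2 / Real.pi * θ)) := by
        field_simp
      rw [heq]
      calc Real.pi / 2 * (|σ| * (2 / Real.pi * θ)) ≤ Real.pi / 2 * (4 * δ) :=
            mul_le_mul_of_nonneg_left h2 (by positivity)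
      _ = 2 * Real.pi * δ := by ring
    have hθδ2 : θ + δ < 2 * θ := by linarith
    have h1 : dist x y * (θ + δ) ≤ (|σ| + 2 * δ) * (2 * θ) :=
      mul_le_mul hdist hθδ2.le hθδ.le (by positivity)
    have h2 : (|σ| + 2 * δ) * (2 * θ) = 2 * (|σ| * θ) + 4 * δ * θ := by ring
    have h3 : 4 * δ * θ ≤ 2 * Real.pi * δ := by
      have := mul_le_mul_of_nonneg_left hθpi (by positivity : (0:ℝ) ≤ 4 * δ)
      linarith
    have h5 : 6 * Real.pi * δ ≤ 19 * δ := by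
      have := mul_le_mul_of_nonneg_right (show 6 * Real.pi ≤ 19 by linarith) hδ.le
      linarith
    linarith

/-- Diameter bound for the intersection of two δ-tubes. -/
theorem stmt_2 (n : ℕ) :
    ∃ C > (0 : ℝ), ∀ (e₁ e₂ a₁ a₂ : Euc n),
      e₁ ∈ Metric.sphere (0 : Euc n) 1 → e₂ ∈ Metric.sphere (0 : Euc n) 1 →
      ∀ δ : ℝ, 0 < δ → δ < 1 →
        EMetric.diam (tube δ e₁ a₁ ∩ tube δ e₂ a₂) ≤
          ENNReal.ofReal (C * δ / (acuteAngle e₁ e₂ + δ)) := by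
  refine ⟨19, by norm_num, fun e₁ e₂ a₁ a₂ he₁ he₂ δ hδ hδ1 => ?_⟩
  rw [mem_sphere_zero_iff_norm] at he₁ he₂
  apply EMetric.diam_le
  rintro x ⟨hx₁, hx₂⟩ y ⟨hy₁, hy₂⟩
  have hθδ : 0 < acuteAngle e₁ e₂ + δ := by
    have := Real.arccos_nonneg |(inner ℝ e₁ e₂ : ℝ)|
    unfold acuteAngle; linarith
  rw [edist_dist]
  exact ENNReal.ofReal_le_ofReal
    (dist_le_of_mem_tubes he₁ he₂ hδ hδ1 hx₁ hx₂ hy₁ hy₂)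

end
end

section
/- For any two directions e₁, e₂ in S^{n-1} and points a₁, a₂ in ℝⁿ, the Lebesgue measure of the intersection T^δ_{e₁}(a₁) ∩ T^δ_{e₂}(a₂) is at most a constant (depending only on n) times δⁿ/(θ(e₁,e₂) + δ). -/
open MeasureTheory Metric Set Filter ENNReal Topology

noncomputable section

open RealInnerProductSpace Real

set_option maxHeartbeats 1000000

lemma tube_decomp {n : ℕ} {δ : ℝ} (hδ : 0 ≤ δ) {e a x : Euc n} (hx : x ∈ tube δ e a) :
    ∃ t : ℝ, ∃ u : Euc n, |t| ≤ 1/2 ∧ ‖u‖ ≤ δ ∧ x = a + t • e + u := by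
  have hcomp : IsCompact (unitSegment e a) := by
    have himg : unitSegment e a = (fun t : ℝ => a + t • e) '' Icc (-(1/2)) (1/2) := by
      ext y
      simp only [unitSegment, mem_setOf_eq, mem_image, mem_Icc, abs_le]
      constructor
      · rintro ⟨t, ht, rfl⟩; exact ⟨t, ht, rfl⟩
      · rintro ⟨t, ht, rfl⟩; exact ⟨t, ht, rfl⟩
    rw [himg]
    exact isCompact_Icc.image (by fun_prop)
  have hne : (unitSegment e a).Nonempty := ⟨a, 0, by norm_num⟩
  rw [tube, Metric.mem_cthickening_iff] at hx
  obtain ⟨y, hy, hyd⟩ := hcomp.exists_infEdist_eq_edist hne x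
  rw [hyd, edist_le_ofReal hδ] at hx
  obtain ⟨t, ht, rfl⟩ := hy
  refine ⟨t, x - (a + t • e), ht, ?_, by abel⟩
  rw [← dist_eq_norm]
  exact hx

lemma key_angle {n : ℕ} {e₁ e₂ a₁ a₂ : Euc n} (h₁ : ‖e₁‖ = 1) (h₂ : ‖e₂‖ = 1)
    {δ : ℝ} (hδ : 0 < δ) (hδ1 : δ < 1) {x y : Euc n}
    (hx : x ∈ tube δ e₁ a₁ ∩ tube δ e₂ a₂) (hy : y ∈ tube δ e₁ a₁ ∩ tube δ e₂ a₂) :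
    |⟪e₁, x - y⟫| ≤ 20 * δ / (acuteAngle e₁ e₂ + δ) := by
  obtain ⟨t₁, u₁, ht₁, hu₁, hxe⟩ := tube_decomp hδ.le hx.1
  obtain ⟨t₂, u₂, ht₂, hu₂, hxe'⟩ := tube_decomp hδ.le hx.2
  obtain ⟨s₁, v₁, hs₁, hv₁, hye⟩ := tube_decomp hδ.le hy.1
  obtain ⟨s₂, v₂, hs₂, hv₂, hye'⟩ := tube_decomp hδ.le hy.2
  set c : ℝ := ⟪e₁, e₂⟫ with hcdef
  have hc : |c| ≤ 1 := by
    have := abs_real_inner_le_norm e₁ e₂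
    rwa [h₁, h₂, one_mul] at this
  set θ := acuteAngle e₁ e₂ with hθdef
  have hθ0 : 0 ≤ θ := Real.arccos_nonneg _
  have hθπ : θ ≤ π / 2 := Real.arccos_le_pi_div_two.mpr (abs_nonneg c)
  have hxy1 : x - y = (t₁ - s₁) • e₁ + (u₁ - v₁) := by rw [hxe, hye]; module
  have hxy2 : x - y = (t₂ - s₂) • e₂ + (u₂ - v₂) := by rw [hxe', hye']; module
  set α := t₁ - s₁ with hαdef
  set β := t₂ - s₂ with hβdef
  have hw1 : ‖u₁ - v₁‖ ≤ 2 * δ := (norm_sub_le _ _).trans (by linarith)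
  have hw2 : ‖u₂ - v₂‖ ≤ 2 * δ := (norm_sub_le _ _).trans (by linarith)
  have hα1 : |α| ≤ 1 := by
    calc |α| = |t₁ + -s₁| := by rw [hαdef, sub_eq_add_neg]
    _ ≤ |t₁| + |(-s₁)| := abs_add_le _ _
    _ ≤ 1 := by rw [abs_neg]; linarith
  have hee : ⟪e₁, e₁⟫ = 1 := by
    rw [real_inner_self_eq_norm_sq, h₁]; norm_num
  have hiz : ⟪e₁, x - y⟫ = α + ⟪e₁, u₁ - v₁⟫ := by
    rw [hxy1, inner_add_right, real_inner_smul_right, hee, mul_one]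
  have hiw : |⟪e₁, u₁ - v₁⟫| ≤ 2 * δ := by
    have := abs_real_inner_le_norm e₁ (u₁ - v₁)
    rw [h₁, one_mul] at this
    linarith
  have hA : |⟪e₁, x - y⟫| ≤ |α| + 2 * δ := by
    rw [hiz]
    calc |α + ⟪e₁, u₁ - v₁⟫| ≤ |α| + |⟪e₁, u₁ - v₁⟫| := abs_add_le _ _
    _ ≤ |α| + 2 * δ := by linarith
  have h3 : |⟪e₁, x - y⟫| ≤ 3 := by linarith
  -- perpendicular estimate
  set w : Euc n := α • e₁ - β • e₂ with hwdef
  have hznorm : ‖w‖ ≤ 4 * δ := by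
    have hzeq : w = (u₂ - v₂) - (u₁ - v₁) := by
      have h := hxy1.symm.trans hxy2
      rw [hwdef]
      have : α • e₁ + (u₁ - v₁) = β • e₂ + (u₂ - v₂) := h
      linear_combination (norm := module) this
    rw [hzeq]
    calc ‖(u₂ - v₂) - (u₁ - v₁)‖ ≤ ‖u₂ - v₂‖ + ‖u₁ - v₁‖ := norm_sub_le _ _
    _ ≤ 4 * δ := by linarith
  have hr : ⟪w, e₂⟫ = α * c - β := by
    rw [hwdef, inner_sub_left, real_inner_smul_left, real_inner_smul_left,
      real_inner_self_eq_norm_sq, h₂, ← hcdef]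
    ring
  have hkey : w - (α * c - β) • e₂ = α • (e₁ - c • e₂) := by
    rw [hwdef]; module
  have hsqeq : ‖w - (α * c - β) • e₂‖ ^ 2 = ‖w‖ ^ 2 - (α * c - β) ^ 2 := by
    rw [norm_sub_sq_real, real_inner_smul_right, hr, norm_smul, Real.norm_eq_abs, h₂,
      mul_one, sq_abs]
    ring
  have hsq : ‖w - (α * c - β) • e₂‖ ^ 2 ≤ ‖w‖ ^ 2 := by
    rw [hsqeq]; nlinarith [sq_nonneg (α * c - β)]
  have hcontr : ‖w - (α * c - β) • e₂‖ ≤ ‖w‖ := by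
    nlinarith [norm_nonneg (w - (α * c - β) • e₂), norm_nonneg w]
  have hne2 : ‖e₁ - c • e₂‖ = Real.sqrt (1 - c ^ 2) := by
    have hn2 : ‖e₁ - c • e₂‖ ^ 2 = 1 - c ^ 2 := by
      rw [norm_sub_sq_real, real_inner_smul_right, norm_smul, Real.norm_eq_abs, h₂, h₁,
        ← hcdef, mul_one, sq_abs]
      ring
    rw [← hn2, Real.sqrt_sq (norm_nonneg _)]
  have hperp : |α| * Real.sqrt (1 - c ^ 2) ≤ 4 * δ := by
    have : ‖α • (e₁ - c • e₂)‖ ≤ ‖w‖ := hkey ▸ hcontr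
    rw [norm_smul, norm_eq_abs, hne2] at this
    linarith
  have hsin : Real.sin θ = Real.sqrt (1 - c ^ 2) := by
    rw [hθdef, acuteAngle, Real.sin_arccos, sq_abs]
  have hsθ : 2 / π * θ ≤ Real.sin θ := Real.mul_le_sin hθ0 hθπ
  have hs0 : 0 ≤ Real.sqrt (1 - c ^ 2) := Real.sqrt_nonneg _
  have hs3 : 2 * θ ≤ Real.sqrt (1 - c ^ 2) * π := by
    rw [hsin] at hsθ
    rw [div_mul_eq_mul_div, div_le_iff₀ Real.pi_pos] at hsθ
    linarith
  have hπ1 : π ≤ 3.15 := Real.pi_lt_d2.le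
  have hπ2 : 3 < π := Real.pi_gt_three
  rcases le_or_gt θ δ with hcase | hcase
  · have hpos : 0 < θ + δ := by linarith
    have : (3 : ℝ) ≤ 20 * δ / (θ + δ) := by
      rw [le_div_iff₀ hpos]; linarith
    linarith
  · have hpos : 0 < θ + δ := by linarith
    rw [le_div_iff₀ hpos]
    have e1 : |α| * (2 * θ) ≤ |α| * (Real.sqrt (1 - c ^ 2) * π) :=
      mul_le_mul_of_nonneg_left hs3 (abs_nonneg α)
    have e2 : |α| * Real.sqrt (1 - c ^ 2) * π ≤ 4 * δ * π :=
      mul_le_mul_of_nonneg_right hperp Real.pi_pos.le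
    have hαθ : |α| * θ ≤ 2 * π * δ := by linarith
    have m1 : |⟪e₁, x - y⟫| * (θ + δ) ≤ (|α| + 2 * δ) * (θ + δ) :=
      mul_le_mul_of_nonneg_right hA hpos.le
    have m2 : |α| * δ ≤ |α| * θ := mul_le_mul_of_nonneg_left hcase.le (abs_nonneg α)
    have m3 : δ * θ ≤ δ * (π / 2) := mul_le_mul_of_nonneg_left hθπ hδ.le
    have m4 : δ * δ ≤ δ * 1 := mul_le_mul_of_nonneg_left hδ1.le hδ.le
    have m5 : δ * π ≤ δ * 3.15 := mul_le_mul_of_nonneg_left hπ1 hδ.le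
    linarith


/-- Measure bound for the intersection of two δ-tubes. -/
theorem stmt_3 (n : ℕ) :
    ∃ C > (0 : ℝ), ∀ (e₁ e₂ a₁ a₂ : Euc n),
      e₁ ∈ Metric.sphere (0 : Euc n) 1 → e₂ ∈ Metric.sphere (0 : Euc n) 1 →
      ∀ δ : ℝ, 0 < δ → δ < 1 →
        volume (tube δ e₁ a₁ ∩ tube δ e₂ a₂) ≤
          ENNReal.ofReal (C * δ ^ n / (acuteAngle e₁ e₂ + δ)) := by
  refine ⟨20 * 2 ^ n, by positivity, ?_⟩
  intro e₁ e₂ a₁ a₂ he₁ he₂ δ hδ hδ1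
  have h₁ : ‖e₁‖ = 1 := by simpa using mem_sphere_zero_iff_norm.mp he₁
  have h₂ : ‖e₂‖ = 1 := by simpa using mem_sphere_zero_iff_norm.mp he₂
  rcases n with _ | m
  · have : e₁ = 0 := by ext i; exact Fin.elim0 i
    rw [this, norm_zero] at h₁
    norm_num at h₁
  set θ := acuteAngle e₁ e₂ with hθdef
  have hθ0 : 0 ≤ θ := Real.arccos_nonneg _
  have hpos : 0 < θ + δ := by linarith
  by_cases hne : (tube δ e₁ a₁ ∩ tube δ e₂ a₂).Nonempty
  swap
  · rw [Set.not_nonempty_iff_eq_empty] at hne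
    rw [hne, measure_empty]
    exact zero_le
  obtain ⟨x₀, hx₀⟩ := hne
  have hcard : Module.finrank ℝ (Euc (m + 1)) = Fintype.card (Fin (m + 1)) :=
    finrank_euclideanSpace
  have horth : Orthonormal ℝ (({0} : Set (Fin (m + 1))).restrict (fun _ => e₁)) := by
    constructor
    · intro i; exact h₁
    · intro i j hij; exact absurd (Subsingleton.elim i j) hij
  obtain ⟨b, hb⟩ := horth.exists_orthonormalBasis_extension_of_card_eq hcard
  have hb0 : b 0 = e₁ := hb 0 rfl
  set L := 20 * δ / (θ + δ) with hLdef
  have hL0 : 0 ≤ L := div_nonneg (by linarith) hpos.le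
  set B : Fin (m + 1) → Set ℝ := fun i => if i = 0 then Icc (⟪e₁, x₀⟫ - L) (⟪e₁, x₀⟫ + L)
    else Icc (b.repr a₁ i - δ) (b.repr a₁ i + δ) with hBdef
  have hmemB : ∀ x ∈ tube δ e₁ a₁ ∩ tube δ e₂ a₂, ∀ i, b.repr x i ∈ B i := by
    intro x hx i
    rw [b.repr_apply_apply]
    by_cases hi : i = 0
    · subst hi
      rw [hb0]
      simp only [hBdef, if_pos rfl, mem_Icc]
      have hk := key_angle h₁ h₂ hδ hδ1 hx hx₀
      rw [inner_sub_right, abs_le] at hk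
      constructor <;> [linarith [hk.1]; linarith [hk.2]]
    · simp only [hBdef, if_neg hi, mem_Icc]
      obtain ⟨t, u, ht, hu, hxe⟩ := tube_decomp hδ.le hx.1
      have hbe : ⟪b i, e₁⟫ = 0 := by
        rw [← hb0]
        exact b.orthonormal.2 hi
      have hbi : ⟪b i, x⟫ = b.repr a₁ i + ⟪b i, u⟫ := by
        rw [hxe, inner_add_right, inner_add_right, real_inner_smul_right, hbe,
          b.repr_apply_apply]
        ring
      have habs : |⟪b i, u⟫| ≤ δ := by
        have h' := abs_real_inner_le_norm (b i) u
        rw [b.orthonormal.1 i, one_mul] at h'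
        linarith
      rw [hbi, abs_le] at *
      constructor <;> [linarith [habs.1]; linarith [habs.2]]
  have hSm : MeasurableSet (Set.univ.pi B) :=
    MeasurableSet.univ_pi (fun i => by
      by_cases hi : i = 0 <;> simp [hBdef, hi, measurableSet_Icc])
  have hsub : tube δ e₁ a₁ ∩ tube δ e₂ a₂ ⊆
      b.repr ⁻¹' (((MeasurableEquiv.toLp 2 (Fin (m + 1) → ℝ)).symm) ⁻¹' (Set.univ.pi B)) := by
    intro x hx
    simp only [mem_preimage, Set.mem_univ_pi]
    intro i
    exact hmemB x hx i
  have hprod : ∏ i : Fin (m + 1), volume (B i)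
      = ENNReal.ofReal (2 * L) * ENNReal.ofReal (2 * δ) ^ m := by
    have h0 : volume (B 0) = ENNReal.ofReal (2 * L) := by
      simp only [hBdef, if_pos rfl, Real.volume_Icc]
      congr 1
      ring
    rw [← Finset.mul_prod_erase Finset.univ _ (Finset.mem_univ 0), h0]
    congr 1
    rw [Finset.prod_congr rfl (fun i hi => show volume (B i) = ENNReal.ofReal (2 * δ) by
      simp only [hBdef, if_neg (Finset.ne_of_mem_erase hi), Real.volume_Icc]
      congr 1
      ring), Finset.prod_const]
    congr 1
    simp [Finset.card_erase_of_mem]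
  calc volume (tube δ e₁ a₁ ∩ tube δ e₂ a₂)
      ≤ volume (b.repr ⁻¹' (((MeasurableEquiv.toLp 2 (Fin (m + 1) → ℝ)).symm) ⁻¹'
          (Set.univ.pi B))) := measure_mono hsub
    _ = volume (((MeasurableEquiv.toLp 2 (Fin (m + 1) → ℝ)).symm) ⁻¹' (Set.univ.pi B)) :=
        b.measurePreserving_repr.measure_preimage
          ((((MeasurableEquiv.toLp 2 (Fin (m + 1) → ℝ)).symm).measurable hSm).nullMeasurableSet)
    _ = volume (Set.univ.pi B) :=
        (EuclideanSpace.volume_preserving_symm_measurableEquiv_toLp (Fin (m + 1))).measure_preimage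
          hSm.nullMeasurableSet
    _ = ∏ i : Fin (m + 1), volume (B i) := volume_pi_pi B
    _ = ENNReal.ofReal (2 * L) * ENNReal.ofReal (2 * δ) ^ m := hprod
    _ ≤ ENNReal.ofReal (20 * 2 ^ (m + 1) * δ ^ (m + 1) / (θ + δ)) := by
        rw [← ENNReal.ofReal_pow (by linarith : (0:ℝ) ≤ 2 * δ),
          ← ENNReal.ofReal_mul (by linarith : (0:ℝ) ≤ 2 * L)]
        apply ENNReal.ofReal_le_ofReal
        rw [hLdef]
        have heq : 2 * (20 * δ / (θ + δ)) * (2 * δ) ^ m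
            = 20 * 2 ^ (m + 1) * δ ^ (m + 1) / (θ + δ) := by
          rw [mul_pow, pow_succ, pow_succ]
          field_simp
        exact heq.le


end
end

section
/- Let ℬ = ⋃_{ξ ∈ F} T^δ_ξ(a_ξ) be a bush of δ-tubes whose directions form a (10δ/λ)-separated subset F of S^{n-1} (λ > δ), all containing a common point x₀, and suppose each tube satisfies |E ∩ T^δ_ξ(a_ξ)| ≥ c λ δ^{n-1} for a measurable set E ⊆ ℝⁿ and constant c depending only on n. Then |E ∩ ℬ| ≳ λ |ℬ|, with implicit constant depending only on n. -/
open MeasureTheory Metric Set Filter ENNReal Topology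
open scoped RealInnerProductSpace

noncomputable section

namespace BushAux

variable {n : ℕ}

lemma unitSegment_eq (e a : Euc n) :
    unitSegment e a = (fun t : ℝ => a + t • e) '' Set.Icc (-(1/2)) (1/2) := by
  ext x
  simp only [unitSegment, mem_image, mem_Icc, mem_setOf_eq]
  constructor
  · rintro ⟨t, ht, rfl⟩
    exact ⟨t, abs_le.mp ht, rfl⟩
  · rintro ⟨t, ht, rfl⟩
    exact ⟨t, abs_le.mpr ht, rfl⟩

lemma isCompact_unitSegment (e a : Euc n) : IsCompact (unitSegment e a) := by
  rw [unitSegment_eq]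
  exact isCompact_Icc.image (by fun_prop)

lemma mem_tube {δ : ℝ} (hδ : 0 ≤ δ) {e a x : Euc n} (hx : x ∈ tube δ e a) :
    ∃ (t : ℝ) (w : Euc n), |t| ≤ 1/2 ∧ ‖w‖ ≤ δ ∧ x = a + t • e + w := by
  rw [tube, (isCompact_unitSegment e a).cthickening_eq_biUnion_closedBall hδ] at hx
  obtain ⟨y, hy, hxy⟩ := mem_iUnion₂.mp hx
  obtain ⟨t, ht, rfl⟩ := hy
  refine ⟨t, x - (a + t • e), ht, ?_, by abel⟩
  simpa [dist_eq_norm] using (mem_closedBall.mp hxy)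

lemma norm_sub_proj_le {e : Euc n} (he : ‖e‖ = 1) (w : Euc n) :
    ‖w - ⟪e, w⟫ • e‖ ≤ ‖w‖ := by
  have h : ‖w - ⟪e, w⟫ • e‖^2 = ‖w‖^2 - ⟪e, w⟫^2 := by
    rw [norm_sub_sq_real, real_inner_smul_right, norm_smul, real_inner_comm w e]
    simp [he]
    ring
  nlinarith [norm_nonneg (w - ⟪e, w⟫ • e), norm_nonneg w, sq_nonneg (⟪e, w⟫)]

lemma inner_decomp {e : Euc n} (he : ‖e‖ = 1) (t : ℝ) (u : Euc n) :
    ⟪e, t • e + u⟫ = t + ⟪e, u⟫ := by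
  rw [inner_add_right, real_inner_smul_right, real_inner_self_eq_norm_sq, he]
  ring

lemma perp_decomp {e : Euc n} (he : ‖e‖ = 1) (t : ℝ) (u : Euc n) :
    (t • e + u) - ⟪e, t • e + u⟫ • e = u - ⟪e, u⟫ • e := by
  rw [inner_decomp he, add_smul]
  abel

lemma cyl_vol₀ (hn : 0 < n) {e : Euc n} (he : ‖e‖ = 1) {L h : ℝ} (hL : 0 ≤ L) (hh : 0 ≤ h) :
    volume {y : Euc n | |⟪e, y⟫| ≤ L ∧ ‖y - ⟪e, y⟫ • e‖ ≤ h} ≤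
      ENNReal.ofReal (2 * L * (2 * h) ^ (n - 1)) := by
  set z : Fin n := ⟨0, hn⟩ with hz
  obtain ⟨b, hb⟩ : ∃ b : OrthonormalBasis (Fin n) ℝ (Euc n), ∀ i ∈ ({z} : Set (Fin n)), b i = e := by
    apply Orthonormal.exists_orthonormalBasis_extension_of_card_eq (v := fun _ => e)
    · constructor
      · rintro ⟨i, hi⟩
        simpa using he
      · rintro ⟨i, hi⟩ ⟨j, hj⟩ hij
        rw [Set.mem_singleton_iff] at hi hj
        exact absurd (Subtype.ext (hi.trans hj.symm)) hij
    · rw [Fintype.card_fin]; exact finrank_euclideanSpace_fin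
  have hbz : b z = e := hb z rfl
  set g : Fin n → ℝ := fun i => if i = z then L else h with hg
  set Box : Set (Fin n → ℝ) := Set.univ.pi fun i => Icc (-(g i)) (g i) with hBox
  have hBoxm : MeasurableSet Box := MeasurableSet.univ_pi fun i => measurableSet_Icc
  set φ := (MeasurableEquiv.toLp 2 (Fin n → ℝ)).symm with hφ
  have hsub : {y : Euc n | |⟪e, y⟫| ≤ L ∧ ‖y - ⟪e, y⟫ • e‖ ≤ h} ⊆ b.repr ⁻¹' (φ ⁻¹' Box) := by
    rintro y ⟨h1, h2⟩
    have key : ∀ i : Fin n, |(b.repr y) i| ≤ g i := by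
      intro i
      have hri : (b.repr y) i = ⟪b i, y⟫ := b.repr_apply_apply y i
      by_cases hiz : i = z
      · subst hiz
        rw [hri, hbz, hg]
        simpa using h1
      · have hbe : ⟪b i, e⟫ = 0 := by rw [← hbz]; exact b.orthonormal.2 hiz
        have h3 : ⟪b i, y⟫ = ⟪b i, y - ⟪e, y⟫ • e⟫ := by
          rw [inner_sub_right, real_inner_smul_right, hbe]; ring
        have h4 : |⟪b i, y - ⟪e, y⟫ • e⟫| ≤ ‖y - ⟪e, y⟫ • e‖ := by
          have := abs_real_inner_le_norm (b i) (y - ⟪e, y⟫ • e)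
          rwa [b.orthonormal.1 i, one_mul] at this
        rw [hri, h3]
        simp only [hg, if_neg hiz]
        exact h4.trans h2
    intro i _
    have habs := abs_le.mp (key i)
    exact ⟨habs.1.trans_eq' (by rfl), habs.2⟩
  calc volume {y : Euc n | |⟪e, y⟫| ≤ L ∧ ‖y - ⟪e, y⟫ • e‖ ≤ h}
      ≤ volume (b.repr ⁻¹' (φ ⁻¹' Box)) := measure_mono hsub
    _ = volume (φ ⁻¹' Box) := b.measurePreserving_repr.measure_preimage
        ((hBoxm.preimage φ.measurable).nullMeasurableSet)
    _ = volume Box := (EuclideanSpace.volume_preserving_symm_measurableEquiv_toLp (Fin n)).measure_preimage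
        hBoxm.nullMeasurableSet
    _ = ∏ i, volume (Icc (-(g i)) (g i)) := volume_pi_pi _
    _ = ∏ i, ENNReal.ofReal (2 * g i) := by
        refine Finset.prod_congr rfl fun i _ => ?_
        rw [Real.volume_Icc]
        congr 1
        ring
    _ ≤ ENNReal.ofReal (2 * L * (2 * h) ^ (n - 1)) := by
        rw [← Finset.mul_prod_erase Finset.univ _ (Finset.mem_univ z)]
        have hrest : ∏ i ∈ Finset.univ.erase z, ENNReal.ofReal (2 * g i) =
            ENNReal.ofReal (2 * h) ^ (n - 1) := by
          rw [Finset.prod_congr rfl (fun i hi => ?_), Finset.prod_const,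
            Finset.card_erase_of_mem (Finset.mem_univ z), Finset.card_univ, Fintype.card_fin]
          rw [hg]
          simp only [if_neg (Finset.ne_of_mem_erase hi)]
        rw [hrest]
        have hgz : g z = L := by simp [hg]
        show ENNReal.ofReal (2 * g z) * ENNReal.ofReal (2 * h) ^ (n - 1) ≤ _
        rw [hgz, ← ENNReal.ofReal_pow (by positivity),
          ← ENNReal.ofReal_mul (by positivity)]

lemma cyl_vol (hn : 0 < n) {e : Euc n} (he : ‖e‖ = 1) (x₀ : Euc n) {L h : ℝ}
    (hL : 0 ≤ L) (hh : 0 ≤ h) :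
    volume {x : Euc n | |⟪e, x - x₀⟫| ≤ L ∧ ‖(x - x₀) - ⟪e, x - x₀⟫ • e‖ ≤ h} ≤
      ENNReal.ofReal (2 * L * (2 * h) ^ (n - 1)) := by
  have hset : {x : Euc n | |⟪e, x - x₀⟫| ≤ L ∧ ‖(x - x₀) - ⟪e, x - x₀⟫ • e‖ ≤ h} =
      (fun x => -x₀ + x) ⁻¹' {y : Euc n | |⟪e, y⟫| ≤ L ∧ ‖y - ⟪e, y⟫ • e‖ ≤ h} := by
    ext x
    simp [neg_add_eq_sub]
  rw [hset, measure_preimage_add]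
  exact cyl_vol₀ hn he hL hh

lemma tube_subset_cyl {δ : ℝ} (hδ : 0 ≤ δ) {e : Euc n} (he : ‖e‖ = 1) (a : Euc n) :
    tube δ e a ⊆ {x | |⟪e, x - a⟫| ≤ 1/2 + δ ∧ ‖(x - a) - ⟪e, x - a⟫ • e‖ ≤ δ} := by
  intro x hx
  obtain ⟨t, w, ht, hw, hxe⟩ := mem_tube hδ hx
  have hy : x - a = t • e + w := by rw [hxe]; abel
  have hiw : |⟪e, w⟫| ≤ δ := by
    have := abs_real_inner_le_norm e w
    rw [he, one_mul] at this
    exact this.trans hw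
  constructor
  · rw [hy, inner_decomp he]
    calc |t + ⟪e, w⟫| ≤ |t| + |⟪e, w⟫| := abs_add_le _ _
      _ ≤ 1/2 + δ := add_le_add ht hiw
  · rw [hy, perp_decomp he]
    exact (norm_sub_proj_le he w).trans hw

lemma two_points_in_tube {δ : ℝ} (hδ : 0 ≤ δ) {e a x x₀ : Euc n}
    (hx : x ∈ tube δ e a) (hx₀ : x₀ ∈ tube δ e a) :
    ∃ (α : ℝ) (u : Euc n), ‖u‖ ≤ 2*δ ∧ x - x₀ = α • e + u := by
  obtain ⟨t, w, ht, hw, hxe⟩ := mem_tube hδ hx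
  obtain ⟨t₀, w₀, ht₀, hw₀, hx₀e⟩ := mem_tube hδ hx₀
  refine ⟨t - t₀, w - w₀, (norm_sub_le _ _).trans (by linarith), ?_⟩
  rw [hxe, hx₀e, sub_smul]
  abel

lemma tube_inter_ball_subset {δ ρ : ℝ} (hδ : 0 ≤ δ) {e a x₀ : Euc n} (he : ‖e‖ = 1)
    (hx₀ : x₀ ∈ tube δ e a) :
    tube δ e a ∩ closedBall x₀ ρ ⊆
      {x | |⟪e, x - x₀⟫| ≤ ρ ∧ ‖(x - x₀) - ⟪e, x - x₀⟫ • e‖ ≤ 2*δ} := by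
  rintro x ⟨hx, hxB⟩
  obtain ⟨α, u, hu, hd⟩ := two_points_in_tube hδ hx hx₀
  have hn1 : ‖x - x₀‖ ≤ ρ := by rwa [mem_closedBall, dist_eq_norm] at hxB
  constructor
  · have := abs_real_inner_le_norm e (x - x₀)
    rw [he, one_mul] at this
    exact this.trans hn1
  · rw [hd, perp_decomp he]
    have hiu : |⟪e, u⟫| ≤ ‖u‖ := by
      have := abs_real_inner_le_norm e u
      rwa [he, one_mul] at this
    exact (norm_sub_proj_le he u).trans hu

lemma unit_close {f g : Euc n} (hf : ‖f‖ = 1) (hg : ‖g‖ = 1) {a b m K : ℝ}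
    (hm : 0 < m) (ha : m ≤ a) (hb : m ≤ b) (hK : ‖a • f - b • g‖ ≤ K) :
    ‖f - g‖ ≤ 2 * K / m := by
  have ha0 : 0 < a := hm.trans_le ha
  have hb0 : 0 < b := hm.trans_le hb
  have hab : |a - b| ≤ K := by
    have h1 := abs_norm_sub_norm_le (a • f) (b • g)
    rw [norm_smul, norm_smul, hf, hg, mul_one, mul_one, Real.norm_eq_abs, Real.norm_eq_abs,
      abs_of_pos ha0, abs_of_pos hb0] at h1
    exact h1.trans hK
  have h1 : a * ‖f - g‖ ≤ 2 * K := by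
    have heq : a • f - a • g = (a • f - b • g) + (b - a) • g := by module
    calc a * ‖f - g‖ = ‖a • (f - g)‖ := by
          rw [norm_smul, Real.norm_eq_abs, abs_of_pos ha0]
      _ = ‖(a • f - b • g) + (b - a) • g‖ := by rw [smul_sub, heq]
      _ ≤ ‖a • f - b • g‖ + ‖(b - a) • g‖ := norm_add_le _ _
      _ ≤ K + |b - a| := by
          rw [norm_smul, hg, mul_one, Real.norm_eq_abs]
          exact add_le_add hK le_rfl
      _ ≤ 2 * K := by rw [abs_sub_comm]; linarith
  rw [le_div_iff₀ hm]
  nlinarith [norm_nonneg (f - g)]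

lemma dir_close {e₁ e₂ : Euc n} (h1 : ‖e₁‖ = 1) (h2 : ‖e₂‖ = 1) {α β m K : ℝ}
    (hm : 0 < m) (hα : m ≤ |α|) (hβ : m ≤ |β|) (hK : ‖α • e₁ - β • e₂‖ ≤ K) :
    ‖e₁ - e₂‖ ≤ 2*K/m ∨ ‖e₁ + e₂‖ ≤ 2*K/m := by
  have h1' : ‖-e₁‖ = 1 := by rwa [norm_neg]
  have h2' : ‖-e₂‖ = 1 := by rwa [norm_neg]
  rcases le_or_gt 0 α with hα0 | hα0 <;> rcases le_or_gt 0 β with hβ0 | hβ0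
  · left
    rw [abs_of_nonneg hα0] at hα
    rw [abs_of_nonneg hβ0] at hβ
    exact unit_close h1 h2 hm hα hβ hK
  · right
    rw [abs_of_nonneg hα0] at hα
    rw [abs_of_neg hβ0] at hβ
    have heq : α • e₁ - (-β) • (-e₂) = α • e₁ - β • e₂ := by module
    have := unit_close h1 h2' hm hα hβ (K := K) (by rw [heq]; exact hK)
    rwa [sub_neg_eq_add] at this
  · right
    rw [abs_of_neg hα0] at hα
    rw [abs_of_nonneg hβ0] at hβ
    have heq : (-α) • (-e₁) - β • e₂ = α • e₁ - β • e₂ := by module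
    have := unit_close h1' h2 hm hα hβ (K := K) (by rw [heq]; exact hK)
    have hne : ‖-e₁ - e₂‖ = ‖e₁ + e₂‖ := by
      rw [show -e₁ - e₂ = -(e₁ + e₂) by abel, norm_neg]
    rwa [hne] at this
  · left
    rw [abs_of_neg hα0] at hα
    rw [abs_of_neg hβ0] at hβ
    have heq : (-α) • (-e₁) - (-β) • (-e₂) = α • e₁ - β • e₂ := by module
    have := unit_close h1' h2' hm hα hβ (K := K) (by rw [heq]; exact hK)
    have hne : ‖-e₁ - -e₂‖ = ‖e₁ - e₂‖ := by
      rw [show -e₁ - -e₂ = -(e₁ - e₂) by abel, norm_neg]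
    rwa [hne] at this

lemma tube_dir_close {δ ρ : ℝ} (hδ : 0 < δ) (hρ : 4*δ ≤ ρ) {e₁ e₂ a₁ a₂ x x₀ : Euc n}
    (h1 : ‖e₁‖ = 1) (h2 : ‖e₂‖ = 1)
    (hx1 : x ∈ tube δ e₁ a₁) (hx2 : x ∈ tube δ e₂ a₂)
    (h01 : x₀ ∈ tube δ e₁ a₁) (h02 : x₀ ∈ tube δ e₂ a₂)
    (hfar : ρ < dist x x₀) :
    ‖e₁ - e₂‖ ≤ 16*δ/ρ ∨ ‖e₁ + e₂‖ ≤ 16*δ/ρ := by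
  obtain ⟨α, u₁, hu₁, hd₁⟩ := two_points_in_tube hδ.le hx1 h01
  obtain ⟨β, u₂, hu₂, hd₂⟩ := two_points_in_tube hδ.le hx2 h02
  have hρ0 : 0 < ρ := lt_of_lt_of_le (by linarith) hρ
  have hnorm : ρ < ‖x - x₀‖ := by rwa [dist_eq_norm] at hfar
  have hαb : ρ/2 ≤ |α| := by
    have h3 : ‖x - x₀‖ ≤ |α| + 2*δ := by
      rw [hd₁]
      calc ‖α • e₁ + u₁‖ ≤ ‖α • e₁‖ + ‖u₁‖ := norm_add_le _ _
        _ = |α| + ‖u₁‖ := by rw [norm_smul, h1, mul_one, Real.norm_eq_abs]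
        _ ≤ |α| + 2*δ := by linarith
    linarith
  have hβb : ρ/2 ≤ |β| := by
    have h3 : ‖x - x₀‖ ≤ |β| + 2*δ := by
      rw [hd₂]
      calc ‖β • e₂ + u₂‖ ≤ ‖β • e₂‖ + ‖u₂‖ := norm_add_le _ _
        _ = |β| + ‖u₂‖ := by rw [norm_smul, h2, mul_one, Real.norm_eq_abs]
        _ ≤ |β| + 2*δ := by linarith
    linarith
  have hK : ‖α • e₁ - β • e₂‖ ≤ 4*δ := by
    have h3 : α • e₁ + u₁ = β • e₂ + u₂ := hd₁.symm.trans hd₂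
    have h4 : α • e₁ - β • e₂ = u₂ - u₁ := by
      calc α • e₁ - β • e₂ = (α • e₁ + u₁) - (β • e₂ + u₂) + (u₂ - u₁) := by abel
        _ = u₂ - u₁ := by rw [h3, sub_self, zero_add]
    rw [h4]
    exact (norm_sub_le _ _).trans (by linarith)
  have hres := dir_close h1 h2 (by positivity : (0:ℝ) < ρ/2) hαb hβb hK
  have heq : 2*(4*δ)/(ρ/2) = 16*δ/ρ := by
    field_simp
    ring
  rwa [heq] at hres

lemma card_le_of_sep (hn : 0 < n) {ι : Type*} (S : Finset ι) (p : ι → Euc n) (u : Euc n)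
    {s κ : ℝ} (hs : 0 < s) (hκ : 0 ≤ κ)
    (hsep : ∀ i ∈ S, ∀ j ∈ S, i ≠ j → s < dist (p i) (p j))
    (hin : ∀ i ∈ S, p i ∈ closedBall u κ) :
    (S.card : ℝ) ≤ (2*κ/s + 1)^n := by
  have hnt : Nontrivial (Euc n) := by
    apply Module.nontrivial_of_finrank_pos (R := ℝ)
    rw [finrank_euclideanSpace_fin]
    exact hn
  have hdisj : (S : Set ι).PairwiseDisjoint (fun i => ball (p i) (s/2)) := by
    intro i hi j hj hij
    apply Metric.ball_disjoint_ball
    have := hsep i (by simpa using hi) j (by simpa using hj) hij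
    linarith
  have hsum := measure_biUnion_finset (μ := volume) hdisj (fun i _ => measurableSet_ball)
  have hsub : (⋃ i ∈ S, ball (p i) (s/2)) ⊆ closedBall u (κ + s/2) := by
    intro y hy
    simp only [mem_iUnion, exists_prop] at hy
    obtain ⟨i, hi, hyi⟩ := hy
    have h1 := hin i hi
    rw [mem_closedBall] at h1 ⊢
    rw [mem_ball] at hyi
    calc dist y u ≤ dist y (p i) + dist (p i) u := dist_triangle _ _ _
      _ ≤ κ + s/2 := by linarith
  have hball : ∀ i : ι, volume (ball (p i) (s/2)) =
      ENNReal.ofReal ((s/2)^n) * volume (ball (0 : Euc n) 1) := by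
    intro i
    rw [Measure.addHaar_ball volume (p i) (by positivity : (0:ℝ) ≤ s/2),
      finrank_euclideanSpace_fin]
  have hcb : volume (closedBall u (κ + s/2)) =
      ENNReal.ofReal ((κ + s/2)^n) * volume (ball (0 : Euc n) 1) := by
    rw [Measure.addHaar_closedBall volume u (by positivity : (0:ℝ) ≤ κ + s/2),
      finrank_euclideanSpace_fin]
  have hle : ((S.card : ℝ≥0∞) * ENNReal.ofReal ((s/2)^n)) * volume (ball (0 : Euc n) 1) ≤
      ENNReal.ofReal ((κ + s/2)^n) * volume (ball (0 : Euc n) 1) := by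
    calc ((S.card : ℝ≥0∞) * ENNReal.ofReal ((s/2)^n)) * volume (ball (0 : Euc n) 1)
        = ∑ i ∈ S, volume (ball (p i) (s/2)) := by
          rw [Finset.sum_congr rfl (fun i _ => hball i), Finset.sum_const, nsmul_eq_mul, mul_assoc]
      _ = volume (⋃ i ∈ S, ball (p i) (s/2)) := hsum.symm
      _ ≤ volume (closedBall u (κ + s/2)) := measure_mono hsub
      _ = _ := hcb
  have hBpos : volume (ball (0 : Euc n) 1) ≠ 0 := (measure_ball_pos _ _ one_pos).ne'
  have hBfin : volume (ball (0 : Euc n) 1) ≠ ⊤ := measure_ball_lt_top.ne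
  have hle2 : (S.card : ℝ≥0∞) * ENNReal.ofReal ((s/2)^n) ≤ ENNReal.ofReal ((κ + s/2)^n) :=
    (ENNReal.mul_le_mul_iff_left hBpos hBfin).mp hle
  have hreal : (S.card : ℝ) * (s/2)^n ≤ (κ + s/2)^n := by
    rw [← ENNReal.ofReal_natCast S.card, ← ENNReal.ofReal_mul (by positivity)] at hle2
    exact (ENNReal.ofReal_le_ofReal_iff (by positivity)).mp hle2
  have h2 : (2*κ/s + 1 : ℝ) = (κ + s/2)/(s/2) := by field_simp
  rw [h2, div_pow, le_div_iff₀ (by positivity)]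
  linarith

lemma sum_measure_le {X : Type*} [MeasurableSpace X] (μ : Measure X) {N : ℕ}
    (A : Fin N → Set X) (hA : ∀ i, MeasurableSet (A i)) (M : ℝ≥0∞)
    (hM : ∀ x, ∑ i, (A i).indicator (1 : X → ℝ≥0∞) x ≤ M) :
    ∑ i, μ (A i) ≤ M * μ (⋃ i, A i) := by
  have hU : MeasurableSet (⋃ i, A i) := MeasurableSet.iUnion hA
  calc ∑ i, μ (A i) = ∑ i, ∫⁻ x, (A i).indicator (1 : X → ℝ≥0∞) x ∂μ :=
        Finset.sum_congr rfl fun i _ => (lintegral_indicator_one (hA i)).symm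
    _ = ∫⁻ x, ∑ i, (A i).indicator (1 : X → ℝ≥0∞) x ∂μ :=
        (lintegral_finset_sum _ (fun i _ => measurable_one.indicator (hA i))).symm
    _ ≤ ∫⁻ x, M * (⋃ i, A i).indicator (1 : X → ℝ≥0∞) x ∂μ := by
        apply lintegral_mono
        intro x
        dsimp only
        by_cases hx : x ∈ ⋃ i, A i
        · rw [Set.indicator_of_mem hx, Pi.one_apply, mul_one]
          exact hM x
        · have hnot : ∀ i, x ∉ A i := by simpa [Set.mem_iUnion] using hx
          rw [Set.indicator_of_notMem hx]
          simp [Set.indicator_of_notMem (hnot _)]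
    _ = M * μ (⋃ i, A i) := by
        rw [lintegral_const_mul M (measurable_one.indicator hU), lintegral_indicator_one hU]

end BushAux


set_option maxHeartbeats 1600000 in
/-- The bush estimate: if each tube of a bush with `(10δ/λ)`-separated directions carries
`≳ λδ^{n-1}` of the mass of `E`, then `|E ∩ ℬ| ≳ λ|ℬ|`. -/
theorem stmt_17 (n : ℕ) (c : ℝ) (hc : 0 < c) :
    ∃ C > (0 : ℝ), ∀ (δ lam : ℝ), 0 < δ → δ < lam → lam < 1 →
      ∀ (N : ℕ) (e a : Fin N → Euc n) (x₀ : Euc n) (E : Set (Euc n)), MeasurableSet E →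
        (∀ i, e i ∈ Metric.sphere (0 : Euc n) 1) →
        (∀ i j, i ≠ j → 10 * δ / lam < dist (e i) (e j)) →
        (∀ i, x₀ ∈ tube δ (e i) (a i)) →
        (∀ i, ENNReal.ofReal (c * lam * δ ^ (n - 1)) ≤ volume (E ∩ tube δ (e i) (a i))) →
        ENNReal.ofReal (C * lam) * volume (⋃ i, tube δ (e i) (a i)) ≤
          volume (E ∩ ⋃ i, tube δ (e i) (a i)) := by
  classical
  obtain ⟨K₁, hK₁pos, hK₁⟩ : ∃ K₁ : ℝ, 0 < K₁ ∧ K₁ = 3*2^(n-1) := ⟨_, by positivity, rfl⟩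
  obtain ⟨M₀, hM₀pos, hM₀⟩ : ∃ M₀ : ℝ, 0 < M₀ ∧ M₀ = 2*((4:ℝ)^(n+2)/c + 1)^n :=
    ⟨_, by positivity, rfl⟩
  obtain ⟨N₀, hN₀pos, hN₀⟩ : ∃ N₀ : ℝ, 0 < N₀ ∧ N₀ = (2*(4:ℝ)^(n+1)/c)^n :=
    ⟨_, by positivity, rfl⟩
  have hMK : (0:ℝ) < 2*M₀*K₁ := by nlinarith
  have hNK : (0:ℝ) < N₀*K₁ := by nlinarith
  obtain ⟨C, hCpos, hCle1, hCle2⟩ :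
      ∃ C : ℝ, 0 < C ∧ C ≤ c/(2*M₀*K₁) ∧ C ≤ c/(N₀*K₁) :=
    ⟨min (c/(2*M₀*K₁)) (c/(N₀*K₁)),
      lt_min (div_pos hc hMK) (div_pos hc hNK), min_le_left _ _, min_le_right _ _⟩
  refine ⟨C, hCpos, ?_⟩
  intro δ lam hδ hdl hl1 N e a x₀ E hE hsph hsep htube hmass
  have hlam0 : 0 < lam := hδ.trans hdl
  rcases Nat.eq_zero_or_pos N with rfl | hN0
  · simp
  have hunit : ∀ i, ‖e i‖ = 1 := fun i => by
    have := hsph i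
    rwa [mem_sphere_zero_iff_norm] at this
  have hn : 0 < n := by
    by_contra hn0
    push_neg at hn0
    have hn0' : n = 0 := Nat.le_zero.mp hn0
    have hfr : Module.finrank ℝ (Euc n) = 0 := by
      rw [finrank_euclideanSpace_fin, hn0']
    haveI := Module.finrank_zero_iff.mp hfr
    have h1 := hunit ⟨0, hN0⟩
    rw [Subsingleton.elim (e ⟨0, hN0⟩) 0, norm_zero] at h1
    norm_num at h1
  have hq : n - 1 + 1 = n := Nat.succ_pred_eq_of_pos hn
  have h4n : (4:ℝ)^n = 4^(n-1)*4 := by rw [← pow_succ, hq]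
  have hδ1 : δ ≤ 1 := by linarith
  have hTvol : ∀ i, volume (tube δ (e i) (a i)) ≤ ENNReal.ofReal (K₁*δ^(n-1)) := by
    intro i
    refine (measure_mono (BushAux.tube_subset_cyl hδ.le (hunit i) (a i))).trans ?_
    refine (BushAux.cyl_vol hn (hunit i) (a i) (by linarith : (0:ℝ) ≤ 1/2 + δ) hδ.le).trans ?_
    apply ENNReal.ofReal_le_ofReal
    have h2 : (2*δ)^(n-1) = 2^(n-1)*δ^(n-1) := mul_pow _ _ _
    have hp : (0:ℝ) ≤ 2^(n-1)*δ^(n-1) := by positivity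
    rw [hK₁]
    nlinarith [hp, h2]
  have hBvol : volume (⋃ i, tube δ (e i) (a i)) ≤ (N : ℝ≥0∞) * ENNReal.ofReal (K₁*δ^(n-1)) := by
    refine (measure_iUnion_fintype_le volume _).trans ?_
    calc ∑ i, volume (tube δ (e i) (a i)) ≤ ∑ _i : Fin N, ENNReal.ofReal (K₁*δ^(n-1)) :=
          Finset.sum_le_sum fun i _ => hTvol i
      _ = (N : ℝ≥0∞) * ENNReal.ofReal (K₁*δ^(n-1)) := by
          rw [Finset.sum_const, Finset.card_univ, Fintype.card_fin, nsmul_eq_mul]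
  have hNle : (N:ℝ) ≤ (2*lam/δ)^n := by
    have h := BushAux.card_le_of_sep hn Finset.univ e 0 (s := 10*δ/lam) (κ := 1)
      (by positivity) zero_le_one (fun i _ j _ hij => hsep i j hij)
      (fun i _ => by rw [mem_closedBall, dist_zero_right, hunit i])
    rw [Finset.card_univ, Fintype.card_fin] at h
    refine h.trans (pow_le_pow_left₀ (by positivity) ?_ n)
    have e1 : 2*1/(10*δ/lam) = lam/(5*δ) := by field_simp; ring
    rw [e1]
    have h2 : lam/(5*δ) ≤ lam/δ := by
      rw [div_le_div_iff₀ (by positivity) (by positivity)]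
      nlinarith
    have h3 : (1:ℝ) ≤ lam/δ := (one_le_div hδ).mpr hdl.le
    calc lam/(5*δ) + 1 ≤ lam/δ + lam/δ := add_le_add h2 h3
      _ = 2*lam/δ := by ring
  set ρ : ℝ := c*lam/4^n with hρdef
  have hρpos : 0 < ρ := by rw [hρdef]; positivity
  by_cases hreg : 4*δ ≤ ρ
  · -- Regime 1 : δ small, use the bush argument
    have hcap : ∀ i, volume (tube δ (e i) (a i) ∩ closedBall x₀ ρ) ≤
        ENNReal.ofReal (c/2*lam*δ^(n-1)) := by
      intro i
      refine (measure_mono (BushAux.tube_inter_ball_subset hδ.le (hunit i) (htube i))).trans ?_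
      refine (BushAux.cyl_vol hn (hunit i) x₀ hρpos.le (by linarith : (0:ℝ) ≤ 2*δ)).trans ?_
      apply ENNReal.ofReal_le_ofReal
      have heq : 2*ρ*(2*(2*δ))^(n-1) = c/2*lam*δ^(n-1) := by
        rw [hρdef, show (2:ℝ)*(2*δ) = 4*δ by ring, mul_pow, h4n]
        field_simp
        ring
      exact le_of_eq heq
    set A : Fin N → Set (Euc n) := fun i => (E ∩ tube δ (e i) (a i)) \ closedBall x₀ ρ with hA
    have hTm : ∀ i, MeasurableSet (tube δ (e i) (a i)) := fun i =>
      Metric.isClosed_cthickening.measurableSet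
    have hAm : ∀ i, MeasurableSet (A i) := fun i =>
      (hE.inter (hTm i)).diff measurableSet_closedBall
    have hAvol : ∀ i, ENNReal.ofReal (c/2*lam*δ^(n-1)) ≤ volume (A i) := by
      intro i
      have hsplit : volume (E ∩ tube δ (e i) (a i)) =
          volume (A i) + volume ((E ∩ tube δ (e i) (a i)) ∩ closedBall x₀ ρ) :=
        (measure_diff_add_inter _ measurableSet_closedBall).symm
      have h1 : volume ((E ∩ tube δ (e i) (a i)) ∩ closedBall x₀ ρ) ≤
          ENNReal.ofReal (c/2*lam*δ^(n-1)) :=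
        (measure_mono (inter_subset_inter_left _ inter_subset_right)).trans (hcap i)
      have h2 : ENNReal.ofReal (c*lam*δ^(n-1)) ≤ volume (A i) +
          ENNReal.ofReal (c/2*lam*δ^(n-1)) :=
        (hmass i).trans (by rw [hsplit]; exact add_le_add_right h1 _)
      have h3 : ENNReal.ofReal (c*lam*δ^(n-1)) =
          ENNReal.ofReal (c/2*lam*δ^(n-1)) + ENNReal.ofReal (c/2*lam*δ^(n-1)) := by
        rw [← ENNReal.ofReal_add (by positivity) (by positivity)]
        congr 1
        ring
      rw [h3] at h2
      exact (ENNReal.add_le_add_iff_right ENNReal.ofReal_ne_top).mp h2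
    have hmult : ∀ x, ∑ i, (A i).indicator (1 : Euc n → ℝ≥0∞) x ≤ ENNReal.ofReal M₀ := by
      intro x
      have hsum_card : ∑ i, (A i).indicator (1 : Euc n → ℝ≥0∞) x =
          ((Finset.univ.filter (fun i => x ∈ A i)).card : ℝ≥0∞) := by
        rw [Finset.card_filter]
        push_cast
        refine Finset.sum_congr rfl fun i _ => ?_
        by_cases h : x ∈ A i <;> simp [h]
      rw [hsum_card]
      set S := Finset.univ.filter (fun i => x ∈ A i) with hS
      rcases S.eq_empty_or_nonempty with hSe | hSne
      · rw [hSe]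
        simp
      obtain ⟨i₀, hi₀⟩ := hSne
      have hxmem : ∀ j ∈ S, x ∈ A j := fun j hj => (Finset.mem_filter.mp hj).2
      have hxi₀ := hxmem i₀ hi₀
      have hxfar : ρ < dist x x₀ := by
        have hnb := hxi₀.2
        exact not_le.mp (fun hle => hnb (mem_closedBall.mpr hle))
      set κ' : ℝ := 16*δ/ρ with hκ'
      have hκ'0 : 0 ≤ κ' := by rw [hκ']; positivity
      have hmem2 : ∀ j ∈ S, e j ∈ closedBall (e i₀) κ' ∨ e j ∈ closedBall (-(e i₀)) κ' := by
        intro j hj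
        rcases eq_or_ne j i₀ with rfl | hne
        · left
          rw [mem_closedBall, dist_self]
          exact hκ'0
        · have hxj := hxmem j hj
          have hdc := BushAux.tube_dir_close hδ hreg (hunit i₀) (hunit j)
            hxi₀.1.2 hxj.1.2 (htube i₀) (htube j) hxfar
          rcases hdc with h | h
          · left
            rw [mem_closedBall, dist_eq_norm, norm_sub_rev]
            exact h
          · right
            rw [mem_closedBall, dist_eq_norm, sub_neg_eq_add]
            rw [show e j + e i₀ = e i₀ + e j by abel]
            exact h
      set S₁ := S.filter (fun j => e j ∈ closedBall (e i₀) κ') with hS₁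
      set S₂ := S.filter (fun j => e j ∈ closedBall (-(e i₀)) κ') with hS₂
      have hcard : S.card ≤ S₁.card + S₂.card := by
        refine (Finset.card_le_card fun j hj => ?_).trans (Finset.card_union_le S₁ S₂)
        rcases hmem2 j hj with h | h
        · exact Finset.mem_union_left _ (Finset.mem_filter.mpr ⟨hj, h⟩)
        · exact Finset.mem_union_right _ (Finset.mem_filter.mpr ⟨hj, h⟩)
      have hcap1 : ∀ (u : Euc n) (T : Finset (Fin N)), (∀ j ∈ T, e j ∈ closedBall u κ') →
          (T.card : ℝ) ≤ ((4:ℝ)^(n+2)/c + 1)^n := by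
        intro u T hT
        have h := BushAux.card_le_of_sep hn T e u (s := 10*δ/lam) (by positivity) hκ'0
          (fun i _ j _ hij => hsep i j hij) hT
        refine h.trans (pow_le_pow_left₀ (by positivity) ?_ n)
        have e1 : 2*κ'/(10*δ/lam) = 16*lam/(5*ρ) := by
          rw [hκ']
          field_simp
          ring
        have e2 : 16*lam/(5*ρ) = 16*4^n/(5*c) := by
          rw [hρdef]
          field_simp
        have e3 : (16:ℝ)*4^n/(5*c) ≤ 4^(n+2)/c := by
          rw [div_le_div_iff₀ (by positivity) (by positivity)]
          have h16 : (4:ℝ)^(n+2) = 16*4^n := by rw [pow_add]; ring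
          nlinarith [pow_pos (show (0:ℝ) < 4 by norm_num) n]
        rw [e1, e2]
        linarith
      have hb1 := hcap1 (e i₀) S₁ (fun j hj => (Finset.mem_filter.mp hj).2)
      have hb2 := hcap1 (-(e i₀)) S₂ (fun j hj => (Finset.mem_filter.mp hj).2)
      have hR : (S.card : ℝ) ≤ M₀ := by
        have hcast : (S.card:ℝ) ≤ (S₁.card:ℝ) + (S₂.card:ℝ) := by exact_mod_cast hcard
        rw [hM₀]
        linarith
      calc (S.card : ℝ≥0∞) = ENNReal.ofReal (S.card : ℝ) := by rw [ENNReal.ofReal_natCast]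
        _ ≤ ENNReal.ofReal M₀ := ENNReal.ofReal_le_ofReal hR
    have hsum1 : (N:ℝ≥0∞) * ENNReal.ofReal (c/2*lam*δ^(n-1)) ≤ ∑ i, volume (A i) := by
      calc (N:ℝ≥0∞) * ENNReal.ofReal (c/2*lam*δ^(n-1))
          = ∑ _i : Fin N, ENNReal.ofReal (c/2*lam*δ^(n-1)) := by
            rw [Finset.sum_const, Finset.card_univ, Fintype.card_fin, nsmul_eq_mul]
        _ ≤ ∑ i, volume (A i) := Finset.sum_le_sum fun i _ => hAvol i
    have hkey : ∑ i, volume (A i) ≤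
        ENNReal.ofReal M₀ * volume (E ∩ ⋃ i, tube δ (e i) (a i)) := by
      refine (BushAux.sum_measure_le volume A hAm _ hmult).trans ?_
      refine mul_le_mul_right (measure_mono ?_) _
      refine iUnion_subset fun i => ?_
      intro y hy
      exact ⟨hy.1.1, mem_iUnion.mpr ⟨i, hy.1.2⟩⟩
    have hM₀ne : ENNReal.ofReal M₀ ≠ 0 := (ENNReal.ofReal_pos.mpr hM₀pos).ne'
    rw [← ENNReal.mul_le_mul_iff_right hM₀ne ENNReal.ofReal_ne_top]
    have harith : M₀*(C*lam)*(K₁*δ^(n-1)) ≤ c/2*lam*δ^(n-1) := by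
      have h1 : C*(2*M₀*K₁) ≤ c := (le_div_iff₀ hMK).mp hCle1
      have h2 : M₀*C*K₁ ≤ c/2 := by nlinarith
      have h3 : (0:ℝ) ≤ lam*δ^(n-1) := by positivity
      calc M₀*(C*lam)*(K₁*δ^(n-1)) = (M₀*C*K₁)*(lam*δ^(n-1)) := by ring
        _ ≤ (c/2)*(lam*δ^(n-1)) := mul_le_mul_of_nonneg_right h2 h3
        _ = c/2*lam*δ^(n-1) := by ring
    calc ENNReal.ofReal M₀ * (ENNReal.ofReal (C*lam) * volume (⋃ i, tube δ (e i) (a i)))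
        ≤ ENNReal.ofReal M₀ * (ENNReal.ofReal (C*lam) *
            ((N:ℝ≥0∞) * ENNReal.ofReal (K₁*δ^(n-1)))) :=
          mul_le_mul_right (mul_le_mul_right hBvol _) _
      _ = (N:ℝ≥0∞) * (ENNReal.ofReal M₀ * ENNReal.ofReal (C*lam) *
            ENNReal.ofReal (K₁*δ^(n-1))) := by ring
      _ = (N:ℝ≥0∞) * ENNReal.ofReal (M₀*(C*lam)*(K₁*δ^(n-1))) := by
          rw [← ENNReal.ofReal_mul hM₀pos.le, ← ENNReal.ofReal_mul (by positivity)]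
      _ ≤ (N:ℝ≥0∞) * ENNReal.ofReal (c/2*lam*δ^(n-1)) :=
          mul_le_mul_right (ENNReal.ofReal_le_ofReal harith) _
      _ ≤ ∑ i, volume (A i) := hsum1
      _ ≤ ENNReal.ofReal M₀ * volume (E ∩ ⋃ i, tube δ (e i) (a i)) := hkey
  · -- Regime 2 : δ comparable to lam, so there are boundedly many tubes
    push_neg at hreg
    have hNb : (N:ℝ) ≤ N₀ := by
      refine hNle.trans ?_
      rw [hN₀]
      refine pow_le_pow_left₀ (by positivity) ?_ n
      rw [div_le_div_iff₀ (by positivity) (by positivity)]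
      have h1 : c*lam < 4^(n+1)*δ := by
        have h0 := (div_lt_iff₀ (by positivity : (0:ℝ) < 4^n)).mp hreg
        calc c*lam < 4*δ*4^n := h0
          _ = 4^(n+1)*δ := by rw [pow_succ]; ring
      nlinarith
    have harith : C*lam*(N₀*(K₁*δ^(n-1))) ≤ c*lam*δ^(n-1) := by
      have h1 : C*(N₀*K₁) ≤ c := (le_div_iff₀ hNK).mp hCle2
      have h3 : (0:ℝ) ≤ lam*δ^(n-1) := by positivity
      calc C*lam*(N₀*(K₁*δ^(n-1))) = (C*(N₀*K₁))*(lam*δ^(n-1)) := by ring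
        _ ≤ c*(lam*δ^(n-1)) := mul_le_mul_of_nonneg_right h1 h3
        _ = c*lam*δ^(n-1) := by ring
    calc ENNReal.ofReal (C*lam) * volume (⋃ i, tube δ (e i) (a i))
        ≤ ENNReal.ofReal (C*lam) * ((N:ℝ≥0∞) * ENNReal.ofReal (K₁*δ^(n-1))) :=
          mul_le_mul_right hBvol _
      _ ≤ ENNReal.ofReal (C*lam) * (ENNReal.ofReal N₀ * ENNReal.ofReal (K₁*δ^(n-1))) := by
          refine mul_le_mul_right (mul_le_mul_left ?_ _) _
          rw [← ENNReal.ofReal_natCast N]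
          exact ENNReal.ofReal_le_ofReal hNb
      _ = ENNReal.ofReal (C*lam*(N₀*(K₁*δ^(n-1)))) := by
          rw [← ENNReal.ofReal_mul hN₀pos.le, ← ENNReal.ofReal_mul (by positivity)]
      _ ≤ ENNReal.ofReal (c*lam*δ^(n-1)) := ENNReal.ofReal_le_ofReal harith
      _ ≤ volume (E ∩ tube δ (e ⟨0, hN0⟩) (a ⟨0, hN0⟩)) := hmass _
      _ ≤ volume (E ∩ ⋃ i, tube δ (e i) (a i)) :=
          measure_mono (inter_subset_inter_right _ (subset_iUnion (fun i => tube δ (e i) (a i)) (⟨0, hN0⟩ : Fin N)))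


end
end
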